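/- Let S_n be the sum of n i.i.d. Rademacher random variables and let γ ≥ 0 satisfy γ = o(√n) (in particular γ ≤ √n). Then P(S_n ≥ γ√n) ≥ (1/√(2n))·exp(-γ²/2 - γ⁴/(12n) + O(γ⁵/n^{3/2})). More precisely, there exist absolute constants C, n₀ such that for all n ≥ n₀ and all 0 ≤ γ ≤ n^{1/4}, P(S_n ≥ γ√n) ≥ (1/√(2n))·exp(-γ²/2 - γ⁴/(12n) - C·γ⁵/n^{3/2}). -/

import Mathlib

/-!
Bound the tail from below by the single binomial term at `k = ⌈(n + γ√n)/2⌉`. The effective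
Stirling bounds `√π ≤ stirlingSeq m ≤ stirlingSeq 2 = e²/4` (for `m ≥ 2`) give
`C(n,k)/2ⁿ ≥ (32√π/e⁴)·(2n)^{-1/2}·exp(-n·D(k/n ‖ 1/2))`, where
`D(p ‖ 1/2) = log 2 - binEntropy p`, and `32√π/e⁴ > e^{1/30}`. Writing `k/n = 1/2 + t`, the
expansion `D(1/2 + t ‖ 1/2) ≤ 2t² + (4/3)t⁴ + 96t⁶` shows that for `γ ≤ n^{1/4}` and `n ≥ 10⁸`
the sextic term and the rounding of `k` cost less than `1/30` in the exponent, which the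
constant `e^{1/30}` absorbs; so the bound holds for every `C > 0`.
-/

/-- The probability that a sum `S_n` of `n` i.i.d. Rademacher variables is at least `x`:
`P(S_n ≥ x) = 2^{-n} · ∑_{k : 2k-n ≥ x} C(n,k)`. -/
noncomputable def radTailProb (n : ℕ) (x : ℝ) : ℝ :=
  (∑ k ∈ Finset.range (n + 1),
    if x ≤ 2 * (k : ℝ) - n then (n.choose k : ℝ) else 0) / 2 ^ n

open Real
open scoped Nat

namespace Stirling

theorem stirlingSeq_two : stirlingSeq 2 = exp 2 / 4 := by
  rw [stirlingSeq, show (2 : ℝ) = 1 + 1 by norm_num, exp_add]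
  norm_num
  field_simp
  norm_num

theorem factorial_le_stirling_of_two_le {m : ℕ} (hm : 2 ≤ m) :
    (m ! : ℝ) ≤ exp 2 / 4 * (√(2 * m) * (m / exp 1) ^ m) := by
  have hseq : stirlingSeq m ≤ exp 2 / 4 := by
    obtain ⟨j, rfl⟩ := Nat.exists_eq_add_of_le hm
    rw [← stirlingSeq_two]
    simpa only [Function.comp, add_comm] using
      stirlingSeq'_antitone (show 1 ≤ j + 1 by omega)
  rwa [stirlingSeq, div_le_iff₀ (by positivity)] at hseq

end Stirling

theorem exp_mul_binEntropy {k b : ℕ} (hk : k ≠ 0) (hb : b ≠ 0) :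
    exp ((k + b) * binEntropy (k / (k + b))) = ((k + b : ℝ) ^ (k + b)) / (k ^ k * b ^ b) := by
  have hkb : (k : ℝ) + b ≠ 0 := by positivity
  have h1 : 1 - (k : ℝ) / (k + b) = b / (k + b) := by field_simp; ring
  rw [binEntropy, h1, inv_div, inv_div, mul_add, ← mul_assoc, ← mul_assoc, mul_div_cancel₀ _ hkb,
    mul_div_cancel₀ _ hkb, exp_add, ← log_rpow (by positivity), ← log_rpow (by positivity),
    exp_log (by positivity), exp_log (by positivity)]
  norm_cast
  rw [div_pow, div_pow, pow_add]
  field_simp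
  push_cast
  ring

theorem choose_ge_stirling {k b : ℕ} (hk : 2 ≤ k) (hb : 2 ≤ b) :
    16 * √π / exp 4 * (√(2 * (k + b)) / (√(2 * k) * √(2 * b))) *
      exp ((k + b) * binEntropy (k / (k + b))) ≤ (k + b).choose k := by
  have hfact : ((k + b).choose k : ℝ) * k ! * b ! = (k + b)! := by
    have := Nat.choose_mul_factorial_mul_factorial (Nat.le_add_right k b)
    rw [Nat.add_sub_cancel_left] at this
    exact_mod_cast this
  have hstir := Stirling.le_factorial_stirling (k + b)
  rw [← hfact] at hstir
  rw [exp_mul_binEntropy (by omega) (by omega)]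
  have hpow (x : ℝ) (m : ℕ) : (x / exp 1) ^ m = x ^ m / exp 1 ^ m := div_pow _ _ _
  refine le_of_mul_le_mul_right (a := (k ! : ℝ) * b !) ?_ (by positivity)
  calc _ ≤ 16 * √π / exp 4 * (√(2 * (k + b)) / (√(2 * k) * √(2 * b))) *
        ((k + b : ℝ) ^ (k + b) / (k ^ k * b ^ b)) *
        ((exp 2 / 4 * (√(2 * k) * (k / exp 1) ^ k)) *
          (exp 2 / 4 * (√(2 * b) * (b / exp 1) ^ b))) := by
        gcongr
        · exact Stirling.factorial_le_stirling_of_two_le hk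
        · exact Stirling.factorial_le_stirling_of_two_le hb
    _ = √(2 * π * ↑(k + b)) * (↑(k + b) / rexp 1) ^ (k + b) := by
        rw [hpow, hpow, hpow, show exp 4 = exp 2 * exp 2 by rw [← exp_add]; norm_num,
          show 2 * π * ((k + b : ℕ) : ℝ) = π * (2 * (k + b)) by push_cast; ring,
          sqrt_mul pi_pos.le, pow_add (exp 1)]
        push_cast
        field_simp
        ring
    _ ≤ _ := by rw [← mul_assoc]; exact hstir

theorem choose_div_two_pow_ge {n k : ℕ} (hk : 2 ≤ k) (hnk : 2 ≤ n - k) :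
    32 * √π / exp 4 / √(2 * n) * exp (-(n * (log 2 - binEntropy (k / n)))) ≤
      n.choose k / 2 ^ n := by
  obtain ⟨b, rfl⟩ : ∃ b, n = k + b := ⟨n - k, by omega⟩
  rw [Nat.add_sub_cancel_left] at hnk
  have hamgm : √(2 * k) * √(2 * b) ≤ (k + b : ℝ) := by
    rw [← sqrt_mul (by positivity), sqrt_le_left (by positivity)]
    nlinarith [sq_nonneg ((k : ℝ) - b)]
  have hexp : exp (-((k + b : ℕ) * (log 2 - binEntropy (k / (k + b : ℕ))))) =
      exp ((k + b) * binEntropy (k / (k + b))) / 2 ^ (k + b) := by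
    rw [mul_sub, neg_sub, exp_sub, ← log_pow, exp_log (by positivity)]
    push_cast
    rfl
  have hsqrt : 2 / √(2 * (k + b : ℕ)) ≤ √(2 * (k + b)) / (√(2 * k) * √(2 * b)) := by
    rw [div_le_div_iff₀ (by positivity) (by positivity)]
    push_cast
    nlinarith [hamgm, mul_self_sqrt (by positivity : (0 : ℝ) ≤ 2 * (k + b))]
  rw [hexp]
  calc _ = 16 * √π / exp 4 * (2 / √(2 * (k + b : ℕ))) *
        exp ((k + b) * binEntropy (k / (k + b))) / 2 ^ (k + b) := by ring
    _ ≤ _ := by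
        gcongr
        exact le_trans (by gcongr) (choose_ge_stirling hk hnk)

theorem one_add_mul_log_add_one_sub_mul_log_le {x : ℝ} (h0 : 0 ≤ x) (h1 : x ≤ 1 / 2) :
    (1 + x) * log (1 + x) + (1 - x) * log (1 - x) ≤ x ^ 2 + x ^ 4 / 6 + 3 * x ^ 6 := by
  have hx : |x| < 1 := by rw [abs_of_nonneg h0]; linarith
  have hplus := abs_log_sub_add_sum_range_le hx 6
  have hminus := abs_log_sub_add_sum_range_le (x := -x) (by rwa [abs_neg]) 6
  rw [abs_of_nonneg h0] at hplus
  rw [abs_neg, abs_of_nonneg h0] at hminus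
  simp only [Finset.sum_range_succ, Finset.sum_range_zero] at hplus hminus
  norm_num at hplus hminus
  ring_nf at hminus
  have hrem : x ^ 7 / (1 - x) ≤ 2 * x ^ 7 := by
    rw [div_le_iff₀ (by linarith)]
    nlinarith [pow_nonneg h0 7]
  obtain ⟨-, hplus⟩ := abs_le.mp hplus
  obtain ⟨-, hminus⟩ := abs_le.mp hminus
  nlinarith [mul_le_mul_of_nonneg_left (hplus.trans hrem) (by linarith : (0:ℝ) ≤ 1 - x),
    mul_le_mul_of_nonneg_left (hminus.trans hrem) (by linarith : (0:ℝ) ≤ 1 + x),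
    pow_nonneg h0 7, pow_nonneg h0 6]

theorem log_two_sub_binEntropy_two_inv_add_le {t : ℝ} (ht : |t| ≤ 1 / 4) :
    log 2 - binEntropy (2⁻¹ + t) ≤ 2 * t ^ 2 + 4 / 3 * t ^ 4 + 96 * t ^ 6 := by
  wlog h0 : 0 ≤ t generalizing t
  · simpa [binEntropy_two_inv_add, ← sub_eq_add_neg, even_two.neg_pow, (by decide : Even 4).neg_pow,
      (by decide : Even 6).neg_pow] using this (t := -t) (by rwa [abs_neg]) (by linarith)
  have hx := one_add_mul_log_add_one_sub_mul_log_le (x := 2 * t) (by positivity)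
    (by linarith [le_abs_self t])
  have hent : binEntropy (2⁻¹ + t) =
      log 2 - ((1 + 2 * t) * log (1 + 2 * t) + (1 - 2 * t) * log (1 - 2 * t)) / 2 := by
    have h1 : 2⁻¹ + t = (1 + 2 * t) / 2 := by ring
    have h2 : 1 - (2⁻¹ + t) = (1 - 2 * t) / 2 := by ring
    have hplus : 1 + 2 * t ≠ 0 := by linarith
    have hminus : 1 - 2 * t ≠ 0 := by linarith [le_abs_self t]
    rw [binEntropy, h2, h1, inv_div, inv_div, log_div two_ne_zero hplus,
      log_div two_ne_zero hminus]
    ring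
  rw [hent]
  linarith

-- Applied with `q = √n`, `s = γ / (2√n)` and `t = k/n - 1/2` for the rounded index `k`.
theorem quartic_approx_le {q s t : ℝ} (hq : 10 ^ 4 ≤ q) (hs : 0 ≤ s) (hsq : 4 * s ^ 2 * q ≤ 1)
    (hst : s ≤ t) (htq : q ^ 2 * (t - s) ≤ 1) :
    q ^ 2 * (2 * t ^ 2 + 4 / 3 * t ^ 4 + 96 * t ^ 6) ≤
      q ^ 2 * (2 * s ^ 2 + 4 / 3 * s ^ 4) + 1 / 30 := by
  have ht : 0 ≤ t := by linarith
  have hs_small : s ≤ 1 / 200 := by nlinarith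
  have hgap : q * (t - s) ≤ 1 / 10 ^ 4 := by nlinarith
  have ht_small : t ≤ 1 / 190 := by nlinarith
  have hquad : q ^ 2 * (t ^ 2 - s ^ 2) ≤ 1 / 90 := by
    calc q ^ 2 * (t ^ 2 - s ^ 2) = q ^ 2 * (t - s) * (t + s) := by ring
      _ ≤ 1 * (t + s) := by gcongr
      _ ≤ 1 / 90 := by linarith
  have hquart : q ^ 2 * (t ^ 4 - s ^ 4) ≤ 1 / 10 ^ 6 := by
    calc q ^ 2 * (t ^ 4 - s ^ 4) = q ^ 2 * (t - s) * ((t + s) * (t ^ 2 + s ^ 2)) := by ring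
      _ ≤ 1 * ((t + s) * (t ^ 2 + s ^ 2)) := by gcongr
      _ ≤ 1 / 10 ^ 6 := by nlinarith
  have hqt : q * t ^ 2 ≤ 1 / 3 := by
    nlinarith [mul_le_mul_of_nonneg_right hgap (by linarith : 0 ≤ t + s)]
  have hsextic : q ^ 2 * t ^ 6 ≤ 1 / 10 ^ 5 := by
    have h3 : (q * t ^ 2) ^ 3 ≤ (1 / 3) ^ 3 := by gcongr
    nlinarith
  nlinarith

theorem mul_log_two_sub_binEntropy_le {n k : ℕ} {γ : ℝ} (hn : 10 ^ 8 ≤ n) (hγ : 0 ≤ γ)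
    (hγn : γ ^ 2 ≤ √n) (hk_lo : γ * √n ≤ 2 * k - n) (hk_hi : 2 * k - n ≤ γ * √n + 2) :
    n * (log 2 - binEntropy (k / n)) ≤ γ ^ 2 / 2 + γ ^ 4 / (12 * n) + 1 / 30 := by
  set q := √(n : ℝ)
  have hn' : (10 : ℝ) ^ 8 ≤ n := by exact_mod_cast hn
  have hqn : q ^ 2 = n := sq_sqrt (by positivity)
  have hq : 10 ^ 4 ≤ q := le_sqrt_of_sq_le (by linarith)
  set s := γ / (2 * q)
  set t := (k / n : ℝ) - 2⁻¹
  have hgap : q ^ 2 * (t - s) = (2 * k - n - γ * q) / 2 := by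
    simp only [s, t]; rw [← hqn]; field_simp
  have htq : q ^ 2 * (t - s) ≤ 1 := by linarith
  have hst : s ≤ t := by nlinarith
  have hsq : 4 * s ^ 2 * q ≤ 1 := by
    simp only [s]; rw [div_pow, mul_div_assoc', div_mul_eq_mul_div, div_le_one (by positivity)]
    nlinarith
  have ht : |t| ≤ 1 / 4 := by
    have hs : 0 ≤ s := by positivity
    have hs_small : s ≤ 1 / 200 := by nlinarith
    have hgap_small : t - s ≤ 1 / 100 := by nlinarith
    rw [abs_le]; constructor <;> linarith
  calc n * (log 2 - binEntropy (k / n)) = q ^ 2 * (log 2 - binEntropy (2⁻¹ + t)) := by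
        rw [hqn, add_sub_cancel]
    _ ≤ q ^ 2 * (2 * t ^ 2 + 4 / 3 * t ^ 4 + 96 * t ^ 6) := by
        gcongr; exact log_two_sub_binEntropy_two_inv_add_le ht
    _ ≤ q ^ 2 * (2 * s ^ 2 + 4 / 3 * s ^ 4) + 1 / 30 :=
        quartic_approx_le hq (by positivity) hsq hst htq
    _ = γ ^ 2 / 2 + γ ^ 4 / (12 * n) + 1 / 30 := by
        simp only [s]; rw [← hqn]; field_simp; ring

theorem choose_div_two_pow_le_radTailProb {n k : ℕ} {x : ℝ} (hk : k ≤ n) (hx : x ≤ 2 * k - n) :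
    n.choose k / 2 ^ n ≤ radTailProb n x := by
  unfold radTailProb
  gcongr
  have := Finset.single_le_sum
    (f := fun j : ℕ ↦ if x ≤ 2 * (j : ℝ) - n then (n.choose j : ℝ) else 0)
    (fun j _ ↦ by positivity) (Finset.mem_range_succ_iff.mpr hk)
  simpa only [if_pos hx] using this

theorem exp_one_div_thirty_le : exp (1 / 30) ≤ 32 * √π / exp 4 := by
  have hexp4 : exp 4 ≤ 2.7182818286 ^ 4 := by
    rw [show (4 : ℝ) = (4 : ℕ) * 1 by norm_num, exp_nat_mul]
    gcongr
    exact exp_one_lt_d9.le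
  have hexp30 : exp (1 / 30) ≤ 30 / 29 := by
    convert exp_bound_div_one_sub_of_interval (x := 1 / 30) (by norm_num) (by norm_num) using 1
    norm_num
  have hpi : 1.772 ≤ √π := le_sqrt_of_sq_le (by linarith [pi_gt_d6])
  rw [le_div_iff₀ (exp_pos 4)]
  nlinarith [exp_pos (1 / 30)]

theorem exists_two_mul_sub_mem_Icc {n : ℕ} {γ : ℝ} (hn : 10 ^ 8 ≤ n) (hγ : 0 ≤ γ)
    (hγn : γ ^ 2 ≤ √n) :
    ∃ k, 2 ≤ k ∧ 2 ≤ n - k ∧ γ * √n ≤ 2 * k - n ∧ 2 * k - n ≤ γ * √n + 2 := by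
  have hn' : (10 : ℝ) ^ 8 ≤ n := by exact_mod_cast hn
  have hq : 10 ^ 4 ≤ √n := le_sqrt_of_sq_le (by linarith)
  have hγ_small : γ * √n ≤ n / 100 := by
    have : γ ≤ √n / 100 := by nlinarith
    nlinarith [sq_sqrt (Nat.cast_nonneg n : (0 : ℝ) ≤ n)]
  have hk_lo : (n + γ * √n) / 2 ≤ ⌈(n + γ * √n) / 2⌉₊ := Nat.le_ceil _
  have hk_hi : (⌈(n + γ * √n) / 2⌉₊ : ℝ) < (n + γ * √n) / 2 + 1 :=
    Nat.ceil_lt_add_one (by positivity)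
  refine ⟨⌈(n + γ * √n) / 2⌉₊, ?_, ?_, by linarith, by linarith⟩
  · have : (2 : ℝ) ≤ ⌈(n + γ * √n) / 2⌉₊ := by nlinarith [mul_nonneg hγ (sqrt_nonneg n)]
    exact_mod_cast this
  · have : (⌈(n + γ * √n) / 2⌉₊ : ℝ) + 2 ≤ n := by linarith
    have : ⌈(n + γ * √n) / 2⌉₊ + 2 ≤ n := by exact_mod_cast this
    omega

theorem rademacher_tail_lower_bound :
    ∃ C : ℝ, ∃ n₀ : ℕ, 0 < C ∧
      ∀ n : ℕ, n₀ ≤ n → ∀ γ : ℝ, 0 ≤ γ → γ ≤ (n : ℝ) ^ ((1 : ℝ) / 4) →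
        (1 / Real.sqrt (2 * n)) *
            Real.exp (-γ ^ 2 / 2 - γ ^ 4 / (12 * n) - C * γ ^ 5 / (n : ℝ) ^ ((3 : ℝ) / 2))
          ≤ radTailProb n (γ * Real.sqrt n) := by
  refine ⟨1, 10 ^ 8, one_pos, fun n hn γ hγ0 hγ ↦ ?_⟩
  have hγn : γ ^ 2 ≤ √n := by
    calc γ ^ 2 ≤ ((n : ℝ) ^ ((1 : ℝ) / 4)) ^ 2 := by gcongr
      _ = √n := by
        rw [← rpow_natCast, ← rpow_mul (by positivity), sqrt_eq_rpow]; norm_num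
  obtain ⟨k, hk2, hnk2, hk_lo, hk_hi⟩ := exists_two_mul_sub_mem_Icc hn hγ0 hγn
  calc _ ≤ exp (1 / 30) / √(2 * n) * exp (-(γ ^ 2 / 2 + γ ^ 4 / (12 * n) + 1 / 30)) := by
        rw [one_div_mul_eq_div, div_mul_eq_mul_div, ← exp_add]
        gcongr
        have : 0 ≤ 1 * γ ^ 5 / (n : ℝ) ^ ((3 : ℝ) / 2) := by positivity
        linarith
    _ ≤ 32 * √π / exp 4 / √(2 * n) * exp (-(n * (log 2 - binEntropy (k / n)))) := by
        gcongr
        · exact exp_one_div_thirty_le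
        · exact mul_log_two_sub_binEntropy_le hn hγ0 hγn hk_lo hk_hi
    _ ≤ n.choose k / 2 ^ n := choose_div_two_pow_ge hk2 hnk2
    _ ≤ radTailProb n (γ * √n) := choose_div_two_pow_le_radTailProb (by omega) hk_lo
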